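/- arXiv:2511.10228 — 2 statements merged into one kernel-verified Lean document; each statement's English description precedes it below -/
import Mathlib

section
/- Let d, k be positive natural numbers, let X be a finite set of vectors in Euclidean space ℝ^d, and let γ ≥ 0 be such that ‖x‖₂ ≤ γ for every x ∈ X. Then for every μ in the convex hull of X there exist (not necessarily distinct) vectors x₁, …, x_k ∈ X such that ‖μ − (1/k)·(x₁ + ⋯ + x_k)‖₂ ≤ γ/√k. In particular, for every ε > 0, taking any k ≥ γ²/ε² yields a k-uniform vector μ′ in the convex hull of X with ‖μ − μ′‖₂ ≤ ε. -/
/-!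
Build the approximating points greedily. If `e = n • μ - (x₁ + ⋯ + xₙ)` is the current error,
the linear functional `⟪e + μ, ·⟫` attains at some `x ∈ X` a value at least its value at `μ`,
because `μ` lies in the convex hull of `X`. Expanding the square then gives
`‖e + (μ - x)‖² ≤ ‖e‖² - ‖μ‖² + ‖x‖² ≤ ‖e‖² + γ²`, so after `k` steps the error is at most
`√k γ`, and dividing by `k` gives the bound `γ / √k`.
-/

lemma div_sqrt_le_of_sq_div_sq_le {γ ε t : ℝ} (hγ : 0 ≤ γ) (hε : 0 < ε) (ht₀ : 0 < t)
    (ht : γ ^ 2 / ε ^ 2 ≤ t) : γ / Real.sqrt t ≤ ε := by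
  rw [div_le_iff₀ (Real.sqrt_pos.2 ht₀), ← Real.sqrt_sq hγ, ← Real.sqrt_sq hε.le,
    ← Real.sqrt_mul' _ ht₀.le]
  exact Real.sqrt_le_sqrt (by rwa [div_le_iff₀ (by positivity), mul_comm] at ht)

lemma average_mem_convexHull {E : Type*} [AddCommGroup E] [Module ℝ E] {s : Set E} {k : ℕ}
    (hk : 0 < k) {f : Fin k → E} (hf : ∀ i, f i ∈ s) :
    (1 / (k : ℝ)) • ∑ i, f i ∈ convexHull ℝ s := by
  simpa [Finset.centerMass] using Finset.univ.centerMass_mem_convexHull (w := fun _ => (1 : ℝ))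
    (fun _ _ => zero_le_one) (by simpa using hk) (fun i _ => hf i)

section InnerProductSpace

variable {E : Type*} [NormedAddCommGroup E] [InnerProductSpace ℝ E]
  {s : Set E} {γ : ℝ} {μ : E}

lemma exists_mem_norm_add_sub_sq_le (hs : ∀ x ∈ s, ‖x‖ ≤ γ) (hμ : μ ∈ convexHull ℝ s) (e : E) :
    ∃ x ∈ s, ‖e + (μ - x)‖ ^ 2 ≤ ‖e‖ ^ 2 + γ ^ 2 := by
  obtain ⟨x, hxs, hx⟩ :=
    ((innerₛₗ ℝ (e + μ)).convexOn convex_univ).exists_ge_of_mem_convexHull (Set.subset_univ s) hμ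
  refine ⟨x, hxs, ?_⟩
  have hx : inner ℝ (e + μ) μ ≤ inner ℝ (e + μ) x := hx
  have hxγ : ‖x‖ ^ 2 ≤ γ ^ 2 := pow_le_pow_left₀ (norm_nonneg x) (hs x hxs) 2
  have hexpand_x := norm_sub_sq_real (e + μ) x
  have hexpand_μ := norm_sub_sq_real (e + μ) μ
  rw [add_sub_cancel_right] at hexpand_μ
  rw [← add_sub_assoc]
  linarith [sq_nonneg ‖μ‖]

lemma exists_fin_norm_nsmul_sub_sum_sq_le (hs : ∀ x ∈ s, ‖x‖ ≤ γ) (hμ : μ ∈ convexHull ℝ s)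
    (n : ℕ) : ∃ f : Fin n → E, (∀ i, f i ∈ s) ∧ ‖n • μ - ∑ i, f i‖ ^ 2 ≤ n * γ ^ 2 := by
  induction n with
  | zero => exact ⟨Fin.elim0, fun i => i.elim0, by simp⟩
  | succ n ih =>
    obtain ⟨f, hfs, hf⟩ := ih
    obtain ⟨x, hxs, hx⟩ := exists_mem_norm_add_sub_sq_le hs hμ (n • μ - ∑ i, f i)
    refine ⟨Fin.cons x f, Fin.cases hxs hfs, ?_⟩
    have herror : (n + 1) • μ - ∑ i, Fin.cons x f i = (n • μ - ∑ i, f i) + (μ - x) := by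
      rw [Fin.sum_cons, succ_nsmul]
      abel
    rw [herror]
    push_cast
    linarith

lemma exists_fin_norm_sub_average_le (hγ : 0 ≤ γ) (hs : ∀ x ∈ s, ‖x‖ ≤ γ)
    (hμ : μ ∈ convexHull ℝ s) {k : ℕ} (hk : 0 < k) :
    ∃ f : Fin k → E, (∀ i, f i ∈ s) ∧ ‖μ - (1 / (k : ℝ)) • ∑ i, f i‖ ≤ γ / Real.sqrt k := by
  obtain ⟨f, hfs, hf⟩ := exists_fin_norm_nsmul_sub_sum_sq_le hs hμ k
  refine ⟨f, hfs, ?_⟩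
  have hk' : (0 : ℝ) < k := Nat.cast_pos.2 hk
  have herror : ‖k • μ - ∑ i, f i‖ ≤ Real.sqrt k * γ := by
    rw [← Real.sqrt_sq (norm_nonneg _), ← Real.sqrt_sq hγ, ← Real.sqrt_mul hk'.le]
    exact Real.sqrt_le_sqrt hf
  calc ‖μ - (1 / (k : ℝ)) • ∑ i, f i‖ = ‖k • μ - ∑ i, f i‖ / k := by
        rw [← Nat.cast_smul_eq_nsmul ℝ, one_div, div_eq_inv_mul,
          ← norm_smul_of_nonneg (by positivity), smul_sub, inv_smul_smul₀ hk'.ne']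
    _ ≤ Real.sqrt k * γ / k := by gcongr
    _ = γ / Real.sqrt k := by
        field_simp
        rw [Real.sq_sqrt hk'.le, mul_comm]

end InnerProductSpace

theorem approx_caratheodory_general (d k : ℕ) (hk : 0 < k)
    (X : Finset (EuclideanSpace ℝ (Fin d))) (γ : ℝ) (hγ : 0 ≤ γ)
    (hbound : ∀ x ∈ X, ‖x‖ ≤ γ)
    (μ : EuclideanSpace ℝ (Fin d))
    (hμ : μ ∈ convexHull ℝ (X : Set (EuclideanSpace ℝ (Fin d)))) :
    (∃ f : Fin k → EuclideanSpace ℝ (Fin d), (∀ i, f i ∈ X) ∧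
      ‖μ - (1 / (k : ℝ)) • ∑ i, f i‖ ≤ γ / Real.sqrt k) ∧
    (∀ ε : ℝ, 0 < ε → γ ^ 2 / ε ^ 2 ≤ (k : ℝ) →
      ∃ f : Fin k → EuclideanSpace ℝ (Fin d), (∀ i, f i ∈ X) ∧
        (1 / (k : ℝ)) • ∑ i, f i ∈ convexHull ℝ (X : Set (EuclideanSpace ℝ (Fin d))) ∧
        ‖μ - (1 / (k : ℝ)) • ∑ i, f i‖ ≤ ε) := by
  obtain ⟨f, hfX, hf⟩ := exists_fin_norm_sub_average_le hγ hbound hμ hk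
  refine ⟨⟨f, hfX, hf⟩, fun ε hε hkε => ⟨f, hfX, average_mem_convexHull hk hfX, ?_⟩⟩
  exact hf.trans (div_sqrt_le_of_sq_div_sq_le hγ hε (Nat.cast_pos.2 hk) hkε)

/-- Approximate Carathéodory theorem (ℓ₂ case): if every vector of the finite set `X`
in Euclidean space `ℝ^d` has norm at most `γ`, then every `μ` in the convex hull of `X`
is within `γ/√k` of an average of `k` vectors of `X` (repetitions allowed); in
particular, for any `ε > 0` and `k ≥ γ²/ε²`, there is a `k`-uniform vector `μ'` in the
convex hull of `X` with `‖μ − μ'‖₂ ≤ ε`. -/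
theorem approx_caratheodory (d k : ℕ) (hd : 0 < d) (hk : 0 < k)
    (X : Finset (EuclideanSpace ℝ (Fin d))) (γ : ℝ) (hγ : 0 ≤ γ)
    (hbound : ∀ x ∈ X, ‖x‖ ≤ γ)
    (μ : EuclideanSpace ℝ (Fin d))
    (hμ : μ ∈ convexHull ℝ (X : Set (EuclideanSpace ℝ (Fin d)))) :
    (∃ f : Fin k → EuclideanSpace ℝ (Fin d), (∀ i, f i ∈ X) ∧
      ‖μ - (1 / (k : ℝ)) • ∑ i, f i‖ ≤ γ / Real.sqrt k) ∧
    (∀ ε : ℝ, 0 < ε → γ ^ 2 / ε ^ 2 ≤ (k : ℝ) →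
      ∃ f : Fin k → EuclideanSpace ℝ (Fin d), (∀ i, f i ∈ X) ∧
        (1 / (k : ℝ)) • ∑ i, f i ∈ convexHull ℝ (X : Set (EuclideanSpace ℝ (Fin d))) ∧
        ‖μ - (1 / (k : ℝ)) • ∑ i, f i‖ ≤ ε) :=
  approx_caratheodory_general d k hk X γ hγ hbound μ hμ
end

section
/- Let E be a finite type, a ≥ 0, and for each e ∈ E let ℓ_e : ℝ → ℝ be an a-Lipschitz function. Let M be a positive natural number and let 𝒫 be a family of finite subsets of E, each of cardinality at most M. Let f, g : E → ℝ with |f e − g e| ≤ ε/(2·a·M) for all e ∈ E, where ε > 0 and a > 0. Suppose there are L ∈ ℝ and a subfamily U ⊆ 𝒫 such that ∑_{e ∈ p} ℓ_e(f e) = L for every p ∈ U and ∑_{e ∈ p} ℓ_e(f e) ≥ L for every p ∈ 𝒫. Then for every p ∈ U and every q ∈ 𝒫, ∑_{e ∈ p} ℓ_e(g e) ≤ ∑_{e ∈ q} ℓ_e(g e) + ε. -/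
/-!
Each edge cost moves by at most `a · ε/(2aM) = ε/(2M)` when `f` is replaced by `g`, so the cost
of a path of at most `M` edges moves by at most `ε/2`. A path used by `f` costs `L` and every
path costs at least `L` under `f`; comparing under `g` loses `ε/2` on each side.
-/

open Finset

theorem abs_sum_comp_sub_sum_comp_le_card_mul {ι : Type*} (p : Finset ι) (ℓ : ι → ℝ → ℝ)
    {a δ : ℝ} (ha : 0 ≤ a) (hlip : ∀ i ∈ p, ∀ x y, |ℓ i x - ℓ i y| ≤ a * |x - y|)
    {f g : ι → ℝ} (hfg : ∀ i ∈ p, |f i - g i| ≤ δ) :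
    |∑ i ∈ p, ℓ i (f i) - ∑ i ∈ p, ℓ i (g i)| ≤ #p * (a * δ) := by
  rw [← sum_sub_distrib, ← nsmul_eq_mul]
  refine (abs_sum_le_sum_abs _ _).trans (sum_le_card_nsmul _ _ _ fun i hi => ?_)
  exact (hlip i hi _ _).trans (mul_le_mul_of_nonneg_left (hfg i hi) ha)

theorem le_add_of_equilibrium_of_abs_sub_le_half {α : Type*} {P U : Set α} (hU : U ⊆ P)
    {c d : α → ℝ} {L ε : ℝ} (heq : ∀ p ∈ U, c p = L) (hge : ∀ p ∈ P, L ≤ c p)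
    (hcd : ∀ p ∈ P, |c p - d p| ≤ ε / 2) :
    ∀ p ∈ U, ∀ q ∈ P, d p ≤ d q + ε := by
  intro p hp q hq
  have hp' := abs_le.mp (hcd p (hU hp))
  have hq' := abs_le.mp (hcd q hq)
  linarith [heq p hp, hge q hq]

/-- If `f` is an equilibrium flow (all paths in `U` have common cost `L` and no path in
`Paths` is cheaper) for `a`-Lipschitz edge cost functions, and `g` is within `ε/(2aM)` of `f`
on every edge, then `g` satisfies the `ε`-Nash condition on the family `Paths` of paths,
each path being a set of at most `M` edges with cost `∑_{e∈p} ℓ_e(x_e)`. -/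
theorem eps_nash_of_close_flow {E : Type*} [Fintype E] (a : ℝ) (ha : 0 < a)
    (ℓ : E → ℝ → ℝ) (hlip : ∀ e x y, |ℓ e x - ℓ e y| ≤ a * |x - y|)
    (M : ℕ) (hM : 0 < M) (Paths : Set (Finset E)) (hcard : ∀ p ∈ Paths, p.card ≤ M)
    (f g : E → ℝ) (ε : ℝ) (hε : 0 < ε)
    (hfg : ∀ e, |f e - g e| ≤ ε / (2 * a * M))
    (L : ℝ) (U : Set (Finset E)) (hU : U ⊆ Paths)
    (heq : ∀ p ∈ U, ∑ e ∈ p, ℓ e (f e) = L)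
    (hge : ∀ p ∈ Paths, L ≤ ∑ e ∈ p, ℓ e (f e)) :
    ∀ p ∈ U, ∀ q ∈ Paths, ∑ e ∈ p, ℓ e (g e) ≤ ∑ e ∈ q, ℓ e (g e) + ε := by
  refine le_add_of_equilibrium_of_abs_sub_le_half hU heq hge fun p hp => ?_
  have hM' : (0 : ℝ) < M := Nat.cast_pos.mpr hM
  calc |∑ e ∈ p, ℓ e (f e) - ∑ e ∈ p, ℓ e (g e)|
      ≤ #p * (a * (ε / (2 * a * M))) :=
        abs_sum_comp_sub_sum_comp_le_card_mul p ℓ ha.le (fun e _ => hlip e) fun e _ => hfg e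
    _ ≤ M * (a * (ε / (2 * a * M))) := by gcongr; exact hcard p hp
    _ = ε / 2 := by field_simp
end
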